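/- arXiv:2103.02430 — 2 statements merged into one kernel-verified Lean document; each statement's English description precedes it below -/
import Mathlib

section
/- Let D = {(x_t,y_t) : t = 1,…,T} ⊆ ℝ^n × ℝ^n be a finite set with associated matrices X, Y ∈ ℝ^{n×T} and Z, W ∈ ℝ^{ℓ×n}. Then the null-controllable sets of the minimal and maximal linear processes associated with H_D satisfy N(L_-(H_D)) = (Z^{-1}W)^n({0}) and N(L_+(H_D)) = (XY^{-1})^n({0}), where the iterates are of the set-valued maps S ↦ Z^{-1}(WS) and S ↦ X(Y^{-1}S) applied n times to {0}. -/
open Matrix Set Pointwise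

/-- A set-valued map from `ℝ^n` to subsets of `ℝ^n`. -/
abbrev SVMap (n : ℕ) := (Fin n → ℝ) → Set (Fin n → ℝ)

/-- The graph of a set-valued map. -/
def graphOf {n : ℕ} (H : SVMap n) : Set ((Fin n → ℝ) × (Fin n → ℝ)) :=
  {p | p.2 ∈ H p.1}

/-- The set-valued map associated with a graph. -/
def ofGraph {n : ℕ} (G : Set ((Fin n → ℝ) × (Fin n → ℝ))) : SVMap n :=
  fun x => {y | (x, y) ∈ G}

/-- A convex cone: a nonempty convex set closed under nonnegative scalar multiplication. -/
def IsConvexCone {V : Type*} [AddCommGroup V] [Module ℝ V] (C : Set V) : Prop :=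
  C.Nonempty ∧ Convex ℝ C ∧ ∀ c : ℝ, 0 ≤ c → ∀ x ∈ C, c • x ∈ C

/-- A convex process: a set-valued map whose graph is a convex cone. -/
def IsConvexProcess {n : ℕ} (H : SVMap n) : Prop :=
  IsConvexCone (graphOf H)

/-- A linear process: a set-valued map whose graph is a linear subspace. -/
def IsLinearProcess {n : ℕ} (H : SVMap n) : Prop :=
  ∃ S : Submodule ℝ ((Fin n → ℝ) × (Fin n → ℝ)), graphOf H = (S : Set _)

/-- The domain of a set-valued map. -/
def domOf {n : ℕ} (H : SVMap n) : Set (Fin n → ℝ) := {x | (H x).Nonempty}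

/-- The image of a set-valued map. -/
def imOf {n : ℕ} (H : SVMap n) : Set (Fin n → ℝ) := {y | ∃ x, y ∈ H x}

/-- The reachable set: states reachable from the origin by a finite trajectory. -/
def reachSet {n : ℕ} (H : SVMap n) : Set (Fin n → ℝ) :=
  {ξ | ∃ (q : ℕ) (x : ℕ → (Fin n → ℝ)),
    x 0 = 0 ∧ x q = ξ ∧ ∀ k, k < q → x (k + 1) ∈ H (x k)}

/-- The null-controllable set: states steered to the origin by a finite trajectory. -/
def nullSet {n : ℕ} (H : SVMap n) : Set (Fin n → ℝ) :=
  {ξ | ∃ (q : ℕ) (x : ℕ → (Fin n → ℝ)),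
    x 0 = ξ ∧ x q = 0 ∧ ∀ k, k < q → x (k + 1) ∈ H (x k)}

/-- The feasible set: states from which an infinite trajectory emanates. -/
def feasSet {n : ℕ} (H : SVMap n) : Set (Fin n → ℝ) :=
  {ξ | ∃ x : ℕ → (Fin n → ℝ), x 0 = ξ ∧ ∀ k, x (k + 1) ∈ H (x k)}

/-- `H` is reachable if every feasible state is reachable. -/
def IsReachable {n : ℕ} (H : SVMap n) : Prop := feasSet H ⊆ reachSet H

/-- `H` is null-controllable if every feasible state is null-controllable. -/
def IsNullControllable {n : ℕ} (H : SVMap n) : Prop := feasSet H ⊆ nullSet H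

/-- The minimal linear process `L_-` associated with `H`: graph `L_- = lin(graph H) = (-graph H) ∩ graph H`. -/
def Lminus {n : ℕ} (H : SVMap n) : SVMap n := ofGraph ((-(graphOf H)) ∩ graphOf H)

/-- The maximal linear process `L_+` associated with `H`: graph `L_+ = Lin(graph H) = graph H - graph H`. -/
def Lplus {n : ℕ} (H : SVMap n) : SVMap n := ofGraph (graphOf H - graphOf H)

/-- The negative dual process: `p ∈ H^-(q)` iff `⟨p,x⟩ ≥ ⟨q,y⟩` for all `(x,y) ∈ graph H`. -/
def dualNeg {n : ℕ} (H : SVMap n) : SVMap n :=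
  fun q => {p | ∀ x y, y ∈ H x → q ⬝ᵥ y ≤ p ⬝ᵥ x}

/-- The positive dual process: `p ∈ H^+(q)` iff `⟨p,x⟩ ≤ ⟨q,y⟩` for all `(x,y) ∈ graph H`. -/
def dualPos {n : ℕ} (H : SVMap n) : SVMap n :=
  fun q => {p | ∀ x y, y ∈ H x → p ⬝ᵥ x ≤ q ⬝ᵥ y}

/-- `(lam, ξ)` is an eigenpair of `G` if `ξ ≠ 0` and `lam • ξ ∈ G(ξ)`. -/
def IsEigenpair {n : ℕ} (G : SVMap n) (lam : ℝ) (ξ : Fin n → ℝ) : Prop :=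
  ξ ≠ 0 ∧ lam • ξ ∈ G ξ

/-- The conic hull: all conic (nonnegative) combinations of elements of `S`. -/
def coneHull {V : Type*} [AddCommGroup V] [Module ℝ V] (S : Set V) : Set V :=
  {x | ∃ (k : ℕ) (c : Fin k → ℝ) (f : Fin k → V),
    (∀ i, 0 ≤ c i) ∧ (∀ i, f i ∈ S) ∧ x = ∑ i, c i • f i}

/-- The most powerful unfalsified process `H_D`: the convex process with graph `cone D`. -/
def mpup {n : ℕ} (D : Set ((Fin n → ℝ) × (Fin n → ℝ))) : SVMap n := ofGraph (coneHull D)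

/-- The inner product on `ℝ^n × ℝ^n`. -/
def pairDot {n : ℕ} (p q : (Fin n → ℝ) × (Fin n → ℝ)) : ℝ := p.1 ⬝ᵥ q.1 + p.2 ⬝ᵥ q.2

/-- The positive polar cone of a subset of `ℝ^n × ℝ^n`. -/
def polarPos {n : ℕ} (C : Set ((Fin n → ℝ) × (Fin n → ℝ))) :
    Set ((Fin n → ℝ) × (Fin n → ℝ)) :=
  {η | ∀ d ∈ C, 0 ≤ pairDot d η}

/-- The negative polar cone of a subset of `ℝ^n × ℝ^n`. -/
def polarNeg {n : ℕ} (C : Set ((Fin n → ℝ) × (Fin n → ℝ))) :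
    Set ((Fin n → ℝ) × (Fin n → ℝ)) :=
  {η | ∀ d ∈ C, pairDot d η ≤ 0}

/-- The data set `D = {(x_t, y_t)}` whose elements are the column pairs of `X` and `Y`. -/
def colPairs {n T : ℕ} (X Y : Matrix (Fin n) (Fin T) ℝ) :
    Set ((Fin n → ℝ) × (Fin n → ℝ)) :=
  {p | ∃ t : Fin T, p = (fun i => X i t, fun i => Y i t)}

/-- The rows of the matrix `[Z −W]`, viewed as pairs `(z_i, -w_i)` in `ℝ^n × ℝ^n`. -/
def rowPairsZW {m n : ℕ} (Z W : Matrix (Fin m) (Fin n) ℝ) :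
    Set ((Fin n → ℝ) × (Fin n → ℝ)) :=
  {p | ∃ i : Fin m, p = (fun j => Z i j, fun j => -W i j)}

/-- `X ℝ_+^T`: the image of the nonnegative orthant under `X`. -/
def posImage {n T : ℕ} (X : Matrix (Fin n) (Fin T) ℝ) : Set (Fin n → ℝ) :=
  {x | ∃ v : Fin T → ℝ, (∀ t, 0 ≤ v t) ∧ x = X *ᵥ v}

/-- The set-valued map `S ↦ W^{-1}(Z S)`. -/
def mapWiZ {m n : ℕ} (Z W : Matrix (Fin m) (Fin n) ℝ) :
    Set (Fin n → ℝ) → Set (Fin n → ℝ) :=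
  fun S => {y | ∃ x ∈ S, W *ᵥ y = Z *ᵥ x}

/-- The set-valued map `S ↦ Z^{-1}(W S)`. -/
def mapZiW {m n : ℕ} (Z W : Matrix (Fin m) (Fin n) ℝ) :
    Set (Fin n → ℝ) → Set (Fin n → ℝ) :=
  fun S => {y | ∃ x ∈ S, Z *ᵥ y = W *ᵥ x}

/-- The set-valued map `S ↦ Y(X^{-1} S)`. -/
def mapYXi {n T : ℕ} (X Y : Matrix (Fin n) (Fin T) ℝ) :
    Set (Fin n → ℝ) → Set (Fin n → ℝ) :=
  fun S => {y | ∃ v : Fin T → ℝ, X *ᵥ v ∈ S ∧ y = Y *ᵥ v}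

/-- The set-valued map `S ↦ X(Y^{-1} S)`. -/
def mapXYi {n T : ℕ} (X Y : Matrix (Fin n) (Fin T) ℝ) :
    Set (Fin n → ℝ) → Set (Fin n → ℝ) :=
  fun S => {y | ∃ v : Fin T → ℝ, Y *ᵥ v ∈ S ∧ y = X *ᵥ v}

/-- The image of a set under a set-valued map. -/
def imageSV {n : ℕ} (H : SVMap n) (S : Set (Fin n → ℝ)) : Set (Fin n → ℝ) :=
  {y | ∃ x ∈ S, y ∈ H x}

/-- The inverse of a set-valued map. -/
def invSV {n : ℕ} (H : SVMap n) : SVMap n := fun y => {x | y ∈ H x}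

/-- The linear map `(a, b) ↦ (b, -a)` on `ℝ^n × ℝ^n`. -/
def flipMap {n : ℕ} : ((Fin n → ℝ) × (Fin n → ℝ)) → ((Fin n → ℝ) × (Fin n → ℝ)) :=
  fun p => (p.2, -p.1)

/-- The orthogonal complement of a subset of `ℝ^n × ℝ^n`. -/
def orthPair {n : ℕ} (C : Set ((Fin n → ℝ) × (Fin n → ℝ))) :
    Set ((Fin n → ℝ) × (Fin n → ℝ)) :=
  {q | ∀ p ∈ C, pairDot p q = 0}

/-- The dual linear process `L^⊥`, with graph `{(b, -a) : (a, b) ∈ (graph L)^⊥}`. -/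
def perpProcess {n : ℕ} (L : SVMap n) : SVMap n :=
  ofGraph (flipMap '' orthPair (graphOf L))

/-- The orthogonal complement of a subset of `ℝ^n`. -/
def orthVec {n : ℕ} (S : Set (Fin n → ℝ)) : Set (Fin n → ℝ) :=
  {x | ∀ y ∈ S, x ⬝ᵥ y = 0}

/-!
The graph of `L_+(H_D)` is `cone D - cone D`, the range of `v ↦ (Xv, Yv)`, so its one-step
preimage map is `S ↦ X(Y⁻¹S)`. The graph of `L_-(H_D)` is the lineality space `-cone D ∩ cone D`.
Since `cone D` is finitely generated it is closed (Carathéodory), so Farkas' lemma gives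
`cone D = D⁺⁺`, whence `lin(cone D) = (D⁺)^⊥`; with `D⁺` generated by the rows of `[Z −W]` this is
`{(a, b) : Za = Wb}`, and the preimage map is `S ↦ Z⁻¹(WS)`.

For a linear process the states steered to `0` in `q` steps form the subspace `F^q(0)`, where `F`
is the monotone preimage map on subspaces. The chain `F^q(0)` increases, and once it stalls it is
constant; as each strict step raises the dimension, it is constant from step `n` on.
-/
lemma single_one_nonneg {ι : Type*} [DecidableEq ι] (i : ι) : (0 : ι → ℝ) ≤ Pi.single i 1 :=
  Pi.single_nonneg.mpr zero_le_one

section ConicImage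

variable {ι E : Type*} [Fintype ι] [AddCommGroup E] [Module ℝ E]

/-- The Carathéodory step: sliding `v` along a kernel direction `g` until a coordinate vanishes. -/
lemma exists_nonneg_eq_erase [DecidableEq ι] (A : (ι → ℝ) →ₗ[ℝ] E) {s : Finset ι} {g : ι → ℝ}
    (hgs : ∀ i ∉ s, g i = 0) (hAg : A g = 0) (hg : ∃ i, 0 < g i) {v : ι → ℝ} (hv : 0 ≤ v)
    (hvs : ∀ i ∉ s, v i = 0) :
    ∃ i ∈ s, 0 < g i ∧ ∃ w, 0 ≤ w ∧ (∀ j ∉ s.erase i, w j = 0) ∧ A w = A v := by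
  obtain ⟨i, hi, hmin⟩ := Finset.exists_min_image {j | 0 < g j} (fun j => v j / g j)
    (by obtain ⟨i, hi⟩ := hg; exact ⟨i, by simpa using hi⟩)
  have hgi : 0 < g i := by simpa using hi
  set t := v i / g i
  refine ⟨i, by_contra fun h => hgi.ne' (hgs i h), hgi, v - t • g, fun j => ?_, fun j hj => ?_, ?_⟩
  · rcases lt_or_ge 0 (g j) with hgj | hgj
    · have := hmin j (by simpa using hgj)
      simp only [Pi.zero_apply, Pi.sub_apply, Pi.smul_apply, smul_eq_mul, sub_nonneg]
      exact (le_div_iff₀ hgj).mp this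
    · simp only [Pi.zero_apply, Pi.sub_apply, Pi.smul_apply, smul_eq_mul, sub_nonneg]
      exact (mul_nonpos_of_nonneg_of_nonpos (div_nonneg (hv i) hgi.le) hgj).trans (hv j)
  · by_cases hji : j = i
    · simp [hji, t, div_mul_cancel₀ _ hgi.ne']
    · have hjs : j ∉ s := fun h => hj (Finset.mem_erase.mpr ⟨hji, h⟩)
      simp [hvs j hjs, hgs j hjs]
  · simp [map_sub, map_smul, hAg]

variable [TopologicalSpace E] [IsTopologicalAddGroup E] [ContinuousSMul ℝ E] [T2Space E]

/-- If the columns of `A` indexed by `s` are independent, the cone is a linear homeomorphic image of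
a closed orthant; otherwise, by the Carathéodory step, it is the union of the cones obtained by
dropping one column. -/
lemma isClosed_image_nonneg_supported (A : (ι → ℝ) →ₗ[ℝ] E) (s : Finset ι) :
    IsClosed (A '' {v | 0 ≤ v ∧ ∀ i ∉ s, v i = 0}) := by
  classical
  induction s using Finset.strongInduction with
  | H s ih =>
  by_cases hinj : ∀ v : ι → ℝ, (∀ i ∉ s, v i = 0) → A v = 0 → v = 0
  · let P : Submodule ℝ (ι → ℝ) := Submodule.pi (↑s)ᶜ fun _ => ⊥
    have hP : ∀ v, v ∈ P ↔ ∀ i ∉ s, v i = 0 := fun v => by simp [P, Submodule.mem_pi]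
    have hker : LinearMap.ker (A.domRestrict P) = ⊥ := by
      refine LinearMap.ker_eq_bot'.mpr fun w hw => Subtype.ext (hinj w ?_ hw)
      exact (hP w).mp w.2
    have hset : A '' {v | 0 ≤ v ∧ ∀ i ∉ s, v i = 0} =
        A.domRestrict P '' {w | 0 ≤ (w : ι → ℝ)} := by
      ext x
      constructor
      · rintro ⟨v, ⟨hv, hvs⟩, rfl⟩
        exact ⟨⟨v, (hP v).mpr hvs⟩, hv, rfl⟩
      · rintro ⟨w, hw, rfl⟩
        exact ⟨w, ⟨hw, (hP w).mp w.2⟩, rfl⟩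
    rw [hset]
    exact (LinearMap.isClosedEmbedding_of_injective hker).isClosedMap _
      (isClosed_Ici.preimage continuous_subtype_val)
  · push Not at hinj
    obtain ⟨g, hgs, hAg, hpos⟩ : ∃ g : ι → ℝ, (∀ i ∉ s, g i = 0) ∧ A g = 0 ∧ ∃ i, 0 < g i := by
      obtain ⟨g, hgs, hAg, hg0⟩ := hinj
      obtain ⟨i, hi⟩ := Function.ne_iff.mp hg0
      rcases hi.lt_or_gt with hneg | hpos
      · exact ⟨-g, by simpa using hgs, by simpa using hAg, i, by simpa using hneg⟩
      · exact ⟨g, hgs, hAg, i, hpos⟩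
    have hset : A '' {v | 0 ≤ v ∧ ∀ i ∉ s, v i = 0} =
        ⋃ i ∈ s, A '' {v | 0 ≤ v ∧ ∀ j ∉ s.erase i, v j = 0} := by
      ext x
      simp only [Set.mem_iUnion]
      constructor
      · rintro ⟨v, ⟨hv, hvs⟩, rfl⟩
        obtain ⟨i, his, -, w, hw, hws, hAw⟩ := exists_nonneg_eq_erase A hgs hAg hpos hv hvs
        exact ⟨i, his, w, ⟨hw, hws⟩, hAw⟩
      · rintro ⟨i, -, v, ⟨hv, hvs⟩, rfl⟩
        exact ⟨v, ⟨hv, fun j hj => hvs j fun h => hj (Finset.mem_of_mem_erase h)⟩, rfl⟩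
    rw [hset]
    exact isClosed_biUnion_finset fun i hi => ih _ (Finset.erase_ssubset hi)

lemma isClosed_image_nonneg (A : (ι → ℝ) →ₗ[ℝ] E) : IsClosed (A '' {v | 0 ≤ v}) := by
  simpa using isClosed_image_nonneg_supported A Finset.univ

end ConicImage

section Farkas

variable {ι E : Type*} [Fintype ι] [AddCommGroup E] [Module ℝ E] [TopologicalSpace E]
  [IsTopologicalAddGroup E] [ContinuousSMul ℝ E] [T2Space E] [LocallyConvexSpace ℝ E]

theorem exists_strongDual_nonneg_of_notMem_image_nonneg (A : (ι → ℝ) →ₗ[ℝ] E) {x : E}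
    (hx : x ∉ A '' {v | 0 ≤ v}) :
    ∃ f : StrongDual ℝ E, (∀ v, 0 ≤ v → 0 ≤ f (A v)) ∧ f x < 0 := by
  let C : ProperCone ℝ E :=
    ⟨(PointedCone.positive ℝ (ι → ℝ)).map A, by
      simpa [Set.Ici] using isClosed_image_nonneg A⟩
  obtain ⟨f, hfC, hfx⟩ := C.hyperplane_separation_point (x₀ := x) (by simpa [C] using hx)
  exact ⟨f, fun v hv => hfC _ (by simpa [C] using ⟨v, hv, rfl⟩), hfx⟩

end Farkas

section PairDot

variable {n : ℕ}

lemma pairDot_comm (p q : (Fin n → ℝ) × (Fin n → ℝ)) : pairDot p q = pairDot q p := by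
  simp [pairDot, dotProduct_comm]

lemma pairDot_neg_left (p q : (Fin n → ℝ) × (Fin n → ℝ)) : pairDot (-p) q = -pairDot p q := by
  simp [pairDot]
  ring

lemma exists_pairDot_eq (f : ((Fin n → ℝ) × (Fin n → ℝ)) →ₗ[ℝ] ℝ) :
    ∃ η, ∀ p, f p = pairDot p η := by
  refine ⟨(fun i => f (Pi.single i 1, 0), fun i => f (0, Pi.single i 1)), fun p => ?_⟩
  have h₁ := LinearMap.pi_apply_eq_sum_univ (f.comp (LinearMap.inl ℝ _ _)) p.1
  have h₂ := LinearMap.pi_apply_eq_sum_univ (f.comp (LinearMap.inr ℝ _ _)) p.2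
  have hp : f p = f (p.1, 0) + f (0, p.2) := by rw [← map_add]; simp
  have hsingle (i : Fin n) : (fun j => if i = j then (1 : ℝ) else 0) = Pi.single i 1 := by
    ext j; simp [Pi.single_apply, eq_comm]
  simp only [LinearMap.comp_apply, LinearMap.inl_apply, LinearMap.inr_apply, hsingle] at h₁ h₂
  simp [hp, h₁, h₂, pairDot, dotProduct]

end PairDot

section DataCone

variable {n T : ℕ} (X Y : Matrix (Fin n) (Fin T) ℝ)

def mulVecProd : (Fin T → ℝ) →ₗ[ℝ] (Fin n → ℝ) × (Fin n → ℝ) := X.mulVecLin.prod Y.mulVecLin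

@[simp]
lemma mulVecProd_apply (v : Fin T → ℝ) : mulVecProd X Y v = (X *ᵥ v, Y *ᵥ v) := rfl

lemma pairDot_mulVec (v : Fin T → ℝ) (η : (Fin n → ℝ) × (Fin n → ℝ)) :
    pairDot (X *ᵥ v, Y *ᵥ v) η = v ⬝ᵥ (η.1 ᵥ* X + η.2 ᵥ* Y) := by
  rw [pairDot, dotProduct_add, dotProduct_comm (X *ᵥ v), dotProduct_comm (Y *ᵥ v),
    dotProduct_mulVec, dotProduct_mulVec, dotProduct_comm v, dotProduct_comm v]

lemma mem_colPairs_iff {p : (Fin n → ℝ) × (Fin n → ℝ)} :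
    p ∈ colPairs X Y ↔ ∃ t, p = mulVecProd X Y (Pi.single t 1) := by
  simp only [colPairs, mulVecProd_apply, Matrix.mulVec_single_one]
  rfl

lemma mem_polarPos_colPairs_iff {η : (Fin n → ℝ) × (Fin n → ℝ)} :
    η ∈ polarPos (colPairs X Y) ↔ 0 ≤ η.1 ᵥ* X + η.2 ᵥ* Y := by
  simp only [polarPos, mem_colPairs_iff, Set.mem_ofPred_eq, forall_exists_index,
    forall_eq_apply_imp_iff, mulVecProd_apply, pairDot_mulVec, single_one_dotProduct]
  rfl

lemma coneHull_colPairs : coneHull (colPairs X Y) = mulVecProd X Y '' {v | 0 ≤ v} := by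
  ext p
  constructor
  · rintro ⟨k, c, f, hc, hf, rfl⟩
    choose t ht using fun i => (mem_colPairs_iff X Y).mp (hf i)
    refine ⟨∑ i, c i • Pi.single (t i) 1, ?_, by simp only [map_sum, map_smul, ht]⟩
    exact Finset.sum_nonneg fun i _ => smul_nonneg (hc i) (single_one_nonneg (t i))
  · rintro ⟨v, hv, rfl⟩
    refine ⟨T, v, fun t => mulVecProd X Y (Pi.single t 1), hv,
      fun t => (mem_colPairs_iff X Y).mpr ⟨t, rfl⟩, ?_⟩
    conv_lhs => rw [pi_eq_sum_univ' v]
    simp only [map_sum, map_smul]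

lemma mem_coneHull_colPairs_iff {p : (Fin n → ℝ) × (Fin n → ℝ)} :
    p ∈ coneHull (colPairs X Y) ↔ ∀ η ∈ polarPos (colPairs X Y), 0 ≤ pairDot p η := by
  rw [coneHull_colPairs]
  constructor
  · rintro ⟨v, hv, rfl⟩ η hη
    rw [mulVecProd_apply, pairDot_mulVec]
    exact dotProduct_nonneg_of_nonneg hv ((mem_polarPos_colPairs_iff X Y).mp hη)
  · intro hp
    by_contra hnot
    obtain ⟨f, hf, hfp⟩ := exists_strongDual_nonneg_of_notMem_image_nonneg _ hnot
    obtain ⟨η, hη⟩ := exists_pairDot_eq f.toLinearMap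
    have hpolar : η ∈ polarPos (colPairs X Y) := by
      intro d hd
      obtain ⟨t, rfl⟩ := (mem_colPairs_iff X Y).mp hd
      exact hη _ ▸ hf _ (single_one_nonneg t)
    exact (hp η hpolar).not_gt (hη p ▸ hfp)

end DataCone

lemma image_nonneg_sub_image_nonneg {ι E : Type*} [AddCommGroup E] [Module ℝ E]
    (A : (ι → ℝ) →ₗ[ℝ] E) : A '' {v | 0 ≤ v} - A '' {v | 0 ≤ v} = Set.range A := by
  ext x
  constructor
  · rintro ⟨_, ⟨v, -, rfl⟩, _, ⟨w, -, rfl⟩, rfl⟩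
    exact ⟨v - w, map_sub A v w⟩
  · rintro ⟨v, rfl⟩
    exact ⟨A v⁺, ⟨v⁺, posPart_nonneg v, rfl⟩, A v⁻, ⟨v⁻, negPart_nonneg v, rfl⟩,
      by simp only [← map_sub, posPart_sub_negPart]⟩

section Graphs

variable {n T m : ℕ} (X Y : Matrix (Fin n) (Fin T) ℝ) (Z W : Matrix (Fin m) (Fin n) ℝ)

lemma neg_coneHull_inter_coneHull_colPairs :
    -coneHull (colPairs X Y) ∩ coneHull (colPairs X Y) =
      {p | ∀ η ∈ polarPos (colPairs X Y), pairDot p η = 0} := by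
  ext p
  simp only [Set.mem_inter_iff, Set.mem_neg, mem_coneHull_colPairs_iff, pairDot_neg_left,
    neg_nonneg, ← forall₂_and, Set.mem_ofPred_eq, le_antisymm_iff]

lemma graphOf_Lplus_mpup_colPairs :
    graphOf (Lplus (mpup (colPairs X Y))) = Set.range (mulVecProd X Y) := by
  change coneHull (colPairs X Y) - coneHull (colPairs X Y) = _
  rw [coneHull_colPairs, image_nonneg_sub_image_nonneg]

lemma rowPairsZW_eq_colPairs : rowPairsZW Z W = colPairs Zᵀ (-Wᵀ) := rfl

lemma graphOf_Lminus_mpup_colPairs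
    (hZW : polarPos (colPairs X Y) = coneHull (rowPairsZW Z W)) :
    graphOf (Lminus (mpup (colPairs X Y))) = {p | Z *ᵥ p.1 = W *ᵥ p.2} := by
  change -coneHull (colPairs X Y) ∩ coneHull (colPairs X Y) = _
  rw [neg_coneHull_inter_coneHull_colPairs, hZW, rowPairsZW_eq_colPairs, coneHull_colPairs]
  ext p
  have hpair (u : Fin m → ℝ) :
      pairDot p (mulVecProd Zᵀ (-Wᵀ) u) = u ⬝ᵥ (Z *ᵥ p.1 - W *ᵥ p.2) := by
    rw [pairDot_comm, mulVecProd_apply, pairDot_mulVec, vecMul_neg, vecMul_transpose,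
      vecMul_transpose, sub_eq_add_neg]
  simp only [Set.mem_ofPred_eq, Set.forall_mem_image, hpair]
  constructor
  · intro h
    funext i
    simpa [sub_eq_zero] using h (single_one_nonneg i)
  · intro h u _
    rw [h, sub_self, dotProduct_zero]

lemma imageSV_invSV_Lminus_mpup_colPairs
    (hZW : polarPos (colPairs X Y) = coneHull (rowPairsZW Z W)) :
    imageSV (invSV (Lminus (mpup (colPairs X Y)))) = mapZiW Z W := by
  funext S
  ext a
  change (∃ b ∈ S, (a, b) ∈ graphOf (Lminus _)) ↔ _
  rw [graphOf_Lminus_mpup_colPairs X Y Z W hZW]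
  rfl

lemma imageSV_invSV_Lplus_mpup_colPairs :
    imageSV (invSV (Lplus (mpup (colPairs X Y)))) = mapXYi X Y := by
  funext S
  ext a
  change (∃ b ∈ S, (a, b) ∈ graphOf (Lplus _)) ↔ _
  rw [graphOf_Lplus_mpup_colPairs]
  constructor
  · rintro ⟨b, hb, v, hv⟩
    obtain ⟨rfl, rfl⟩ := Prod.mk.inj hv
    exact ⟨v, hb, rfl⟩
  · rintro ⟨v, hv, rfl⟩
    exact ⟨Y *ᵥ v, hv, v, rfl⟩

end Graphs

section NullControllable

variable {n : ℕ} (H : SVMap n)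

lemma mem_iterate_imageSV_invSV_iff (q : ℕ) (ξ : Fin n → ℝ) :
    ξ ∈ (imageSV (invSV H))^[q] {0} ↔
      ∃ x : ℕ → Fin n → ℝ, x 0 = ξ ∧ x q = 0 ∧ ∀ k, k < q → x (k + 1) ∈ H (x k) := by
  induction q generalizing ξ with
  | zero =>
    refine ⟨fun h => ⟨fun _ => ξ, rfl, h, fun k hk => absurd hk k.not_lt_zero⟩, ?_⟩
    rintro ⟨x, rfl, hx, -⟩
    exact hx
  | succ q ih =>
    rw [Function.iterate_succ_apply']
    constructor
    · rintro ⟨y, hy, hξy⟩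
      obtain ⟨x, rfl, hxq, hx⟩ := (ih y).mp hy
      refine ⟨fun k => Nat.casesOn k ξ x, rfl, hxq, fun k hk => ?_⟩
      cases k with
      | zero => exact hξy
      | succ k => exact hx k (by omega)
    · rintro ⟨x, rfl, hxq, hx⟩
      refine ⟨x 1, (ih (x 1)).mpr ⟨fun k => x (k + 1), rfl, hxq, fun k hk => ?_⟩, hx 0 (by omega)⟩
      exact hx (k + 1) (by omega)

lemma nullSet_eq_iUnion_iterate : nullSet H = ⋃ q, (imageSV (invSV H))^[q] {0} := by
  ext ξ
  simp only [Set.mem_iUnion, mem_iterate_imageSV_invSV_iff]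
  rfl

end NullControllable

section Stabilization

open Module

variable {K V : Type*} [DivisionRing K] [AddCommGroup V] [Module K V] [FiniteDimensional K V]
  {F : Submodule K V → Submodule K V}

lemma iterate_bot_le_iterate_bot_finrank (hF : Monotone F) (q : ℕ) :
    F^[q] ⊥ ≤ F^[finrank K V] ⊥ := by
  have hmono : Monotone fun q => F^[q] ⊥ := hF.monotone_iterate_of_le_map bot_le
  obtain ⟨k, hk, hfix⟩ : ∃ k ≤ finrank K V, F (F^[k] ⊥) = F^[k] ⊥ := by
    by_contra! h
    have hrank (k : ℕ) (hk : k ≤ finrank K V + 1) : k ≤ finrank K (F^[k] ⊥) := by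
      induction k with
      | zero => exact Nat.zero_le _
      | succ k ih =>
        have hlt : F^[k] ⊥ < F^[k + 1] ⊥ := by
          refine (hmono k.le_succ).lt_of_ne ?_
          simpa only [Function.iterate_succ_apply'] using (h k (by omega)).symm
        have := Submodule.finrank_lt_finrank_of_lt hlt
        have := ih (by omega)
        omega
    have := hrank _ le_rfl
    have := Submodule.finrank_le (F^[finrank K V + 1] ⊥)
    omega
  have hstable (j : ℕ) : F^[j + k] ⊥ = F^[k] ⊥ := by
    rw [Function.iterate_add_apply, Function.iterate_fixed hfix]
  rcases le_total q (finrank K V) with hq | hq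
  · exact hmono hq
  · rw [← Nat.sub_add_cancel (hk.trans hq), hstable]
    exact hmono hk

lemma iUnion_iterate_eq_iterate_finrank (G : Set V → Set V) (hF : Monotone F)
    (hGF : ∀ p : Submodule K V, G p = F p) :
    ⋃ q, G^[q] {0} = G^[finrank K V] {0} := by
  have hiter (q : ℕ) : G^[q] {0} = F^[q] ⊥ := by
    induction q with
    | zero => simp
    | succ q ih => rw [Function.iterate_succ_apply', Function.iterate_succ_apply', ih, hGF]
  simp only [hiter]
  exact (Set.iUnion_subset fun q => iterate_bot_le_iterate_bot_finrank hF q).antisymm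
    (Set.subset_iUnion (fun q => (F^[q] ⊥ : Set V)) _)

end Stabilization

section Iterates

variable {n T m : ℕ}

lemma iUnion_iterate_mapZiW (Z W : Matrix (Fin m) (Fin n) ℝ) :
    ⋃ q, (mapZiW Z W)^[q] {0} = (mapZiW Z W)^[n] {0} := by
  simpa using iUnion_iterate_eq_iterate_finrank (mapZiW Z W)
    (F := fun p => (p.map W.mulVecLin).comap Z.mulVecLin)
    (fun _ _ h => Submodule.comap_mono (Submodule.map_mono h))
    (fun p => by ext; simp [mapZiW, eq_comm])

lemma iUnion_iterate_mapXYi (X Y : Matrix (Fin n) (Fin T) ℝ) :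
    ⋃ q, (mapXYi X Y)^[q] {0} = (mapXYi X Y)^[n] {0} := by
  simpa using iUnion_iterate_eq_iterate_finrank (mapXYi X Y)
    (F := fun p => (p.comap Y.mulVecLin).map X.mulVecLin)
    (fun _ _ h => Submodule.map_mono (Submodule.comap_mono h))
    (fun p => by ext; simp [mapXYi, eq_comm])

end Iterates

/-- Null-controllable sets of the minimal and maximal linear processes of `H_D`:
`N(L_-(H_D)) = (Z^{-1}W)^n({0})` and `N(L_+(H_D)) = (XY^{-1})^n({0})`. -/
theorem stmt12 {n T m : ℕ} (X Y : Matrix (Fin n) (Fin T) ℝ) (Z W : Matrix (Fin m) (Fin n) ℝ)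
    (hZW : polarPos (colPairs X Y) = coneHull (rowPairsZW Z W)) :
    nullSet (Lminus (mpup (colPairs X Y))) = (mapZiW Z W)^[n] {0} ∧
    nullSet (Lplus (mpup (colPairs X Y))) = (mapXYi X Y)^[n] {0} := by
  constructor
  · rw [nullSet_eq_iUnion_iterate, imageSV_invSV_Lminus_mpup_colPairs X Y Z W hZW,
      iUnion_iterate_mapZiW]
  · rw [nullSet_eq_iUnion_iterate, imageSV_invSV_Lplus_mpup_colPairs, iUnion_iterate_mapXYi]
end

section
/- Let D = {(x_t,y_t) : t = 1,…,T} ⊆ ℝ^n × ℝ^n be a finite set with associated matrices X, Y ∈ ℝ^{n×T} and Z, W ∈ ℝ^{ℓ×n}. Then the negative dual process of H_D satisfies graph(H_D^-) = {(W^⊤v, Z^⊤v) : v ∈ ℝ_+^ℓ} = {(x,y) ∈ ℝ^n × ℝ^n : Y^⊤x − X^⊤y ∈ ℝ_-^T}, where ℝ_-^T is the nonpositive orthant. -/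
open Matrix Set Pointwise

/-!
A pair `(q, p)` lies in the graph of `H^-` exactly when its flip `(p, -q)` lies in the positive
polar cone of `graph H`, and a polar cone does not change when its set is replaced by its conic
hull. Hence `graph H_D^-` is the preimage of `D^+` under the flip. Reading `D^+` as the cone
spanned by the rows of `[Z −W]` gives the first description; testing `D^+` against the finitely
many generators `(x_t, y_t)` gives the second.
-/

section ConeHull

variable {V : Type*} [AddCommGroup V] [Module ℝ V]

theorem subset_coneHull (S : Set V) : S ⊆ coneHull S := fun x hx =>
  ⟨1, fun _ => 1, fun _ => x, fun _ => zero_le_one, fun _ => hx, by simp⟩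

theorem coneHull_range {ι : Type*} [Fintype ι] (f : ι → V) :
    coneHull (range f) = {x | ∃ v : ι → ℝ, (∀ i, 0 ≤ v i) ∧ x = ∑ i, v i • f i} := by
  classical
  ext x
  constructor
  · rintro ⟨k, c, g, hc, hg, rfl⟩
    choose j hj using hg
    refine ⟨fun i => ∑ a with j a = i, c a, fun i => Finset.sum_nonneg fun a _ => hc a, ?_⟩
    calc ∑ a, c a • g a = ∑ i, ∑ a with j a = i, c a • g a := (Finset.sum_fiberwise _ j _).symm
      _ = ∑ i, (∑ a with j a = i, c a) • f i := by
        refine Finset.sum_congr rfl fun i _ => ?_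
        rw [Finset.sum_smul]
        refine Finset.sum_congr rfl fun a ha => ?_
        rw [← hj a, (Finset.mem_filter.mp ha).2]
  · rintro ⟨v, hv, rfl⟩
    let e := Fintype.equivFin ι
    refine ⟨Fintype.card ι, v ∘ e.symm, f ∘ e.symm, fun _ => hv _, fun _ => mem_range_self _, ?_⟩
    exact (e.symm.sum_comp fun i => v i • f i).symm

theorem nonneg_on_coneHull {S : Set V} (φ : V →ₗ[ℝ] ℝ) (hφ : ∀ x ∈ S, 0 ≤ φ x) :
    ∀ x ∈ coneHull S, 0 ≤ φ x := by
  rintro _ ⟨k, c, f, hc, hf, rfl⟩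
  rw [map_sum]
  exact Finset.sum_nonneg fun i _ => by
    rw [map_smul, smul_eq_mul]
    exact mul_nonneg (hc i) (hφ _ (hf i))

end ConeHull

section Polar

variable {n : ℕ}

def pairDotLeft (η : (Fin n → ℝ) × (Fin n → ℝ)) : ((Fin n → ℝ) × (Fin n → ℝ)) →ₗ[ℝ] ℝ where
  toFun d := pairDot d η
  map_add' a b := by simp only [pairDot, Prod.fst_add, Prod.snd_add, add_dotProduct]; ring
  map_smul' c a := by
    simp only [pairDot, Prod.smul_fst, Prod.smul_snd, smul_dotProduct, smul_eq_mul,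
      RingHom.id_apply, mul_add]

theorem polarPos_coneHull (C : Set ((Fin n → ℝ) × (Fin n → ℝ))) :
    polarPos (coneHull C) = polarPos C :=
  Subset.antisymm (fun _ hη d hd => hη d (subset_coneHull C hd))
    fun η hη => nonneg_on_coneHull (pairDotLeft η) hη

theorem mem_graphOf_dualNeg_iff (H : SVMap n) (p : (Fin n → ℝ) × (Fin n → ℝ)) :
    p ∈ graphOf (dualNeg H) ↔ flipMap p ∈ polarPos (graphOf H) := by
  simp only [graphOf, dualNeg, polarPos, flipMap, pairDot, mem_ofPred_eq, Prod.forall,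
    dotProduct_neg, dotProduct_comm _ p.1, dotProduct_comm _ p.2, ← sub_eq_add_neg, sub_nonneg]

theorem graphOf_dualNeg_mpup (D : Set ((Fin n → ℝ) × (Fin n → ℝ))) :
    graphOf (dualNeg (mpup D)) = flipMap ⁻¹' polarPos D := by
  ext p
  rw [mem_graphOf_dualNeg_iff, mem_preimage, ← polarPos_coneHull D]
  rfl

end Polar

theorem rowPairsZW_eq_range {m n : ℕ} (Z W : Matrix (Fin m) (Fin n) ℝ) :
    rowPairsZW Z W = range fun i => (Z i, -W i) := by
  ext p
  simp only [rowPairsZW, mem_ofPred_eq, mem_range, eq_comm]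
  rfl

theorem coneHull_rowPairsZW {m n : ℕ} (Z W : Matrix (Fin m) (Fin n) ℝ) :
    coneHull (rowPairsZW Z W) =
      {p | ∃ v : Fin m → ℝ, (∀ i, 0 ≤ v i) ∧ p = (v ᵥ* Z, -(v ᵥ* W))} := by
  simp only [rowPairsZW_eq_range, coneHull_range, vecMul_eq_sum, Prod.ext_iff, Prod.fst_sum,
    Prod.snd_sum, Prod.smul_mk, smul_neg, Finset.sum_neg_distrib]

theorem pairDot_colPair_flipMap {n T : ℕ} (X Y : Matrix (Fin n) (Fin T) ℝ)
    (p : (Fin n → ℝ) × (Fin n → ℝ)) (t : Fin T) :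
    pairDot (fun i => X i t, fun i => Y i t) (flipMap p) = (p.2 ᵥ* X) t - (p.1 ᵥ* Y) t := by
  simp only [pairDot, flipMap, dotProduct_neg, vecMul, dotProduct_comm _ p.1,
    dotProduct_comm _ p.2, ← sub_eq_add_neg]

/-- Two representations of the graph of the negative dual process of `H_D`:
`graph(H_D^-) = {(W^⊤v, Z^⊤v) : v ∈ ℝ_+^ℓ} = {(x,y) : Y^⊤x - X^⊤y ∈ ℝ_-^T}`. -/
theorem stmt13 {n T m : ℕ} (X Y : Matrix (Fin n) (Fin T) ℝ) (Z W : Matrix (Fin m) (Fin n) ℝ)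
    (hZW : polarPos (colPairs X Y) = coneHull (rowPairsZW Z W)) :
    graphOf (dualNeg (mpup (colPairs X Y))) =
      {p | ∃ v : Fin m → ℝ, (∀ i, 0 ≤ v i) ∧ p = (Matrix.vecMul v W, Matrix.vecMul v Z)} ∧
    graphOf (dualNeg (mpup (colPairs X Y))) =
      {p | ∀ t, Matrix.vecMul p.1 Y t - Matrix.vecMul p.2 X t ≤ 0} := by
  rw [graphOf_dualNeg_mpup]
  constructor
  · rw [hZW, coneHull_rowPairsZW]
    ext ⟨x, y⟩
    simp only [mem_preimage, flipMap, mem_ofPred_eq, Prod.mk.injEq, neg_inj]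
    exact exists_congr fun v => and_congr_right fun _ => and_comm
  · ext p
    simp only [mem_preimage, polarPos, colPairs, mem_ofPred_eq, forall_exists_index,
      forall_eq_apply_imp_iff, pairDot_colPair_flipMap, sub_nonneg, sub_nonpos]
end
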